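/- arXiv:1305.4814 — 2 statements merged into one kernel-verified Lean document; each statement's English description precedes it below -/
import Mathlib

section
/- Let μ ≥ 0 and let K ⊆ ℝ³ be a regular convex cone that is invariant under the one-parameter group generated by the matrix A = [[μ,1,0],[−1,μ,0],[0,0,0]], i.e., exp(tA)[K] = K for all t ∈ ℝ. Then μ = 0, and K is isomorphic to the second-order cone {x ∈ ℝ³ : x₃ ≥ √(x₁² + x₂²)}. -/
/-!
The one-parameter group acts by `exp (t • A) x = (e^{μt} R_t (x₀, x₁), x₂)`, where `R_t` is the
rotation by angle `-t` of the plane of the first two coordinates. If `μ > 0`, follow a point `x`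
of `K` with `x₀ ≠ 0` through `n` full turns and rescale by `e^{-2πμn}`: the points
`(x₀, x₁, e^{-2πμn} x₂)` of `K` tend to `(x₀, x₁, 0)`, and half a turn more puts its negative in
`K`, against pointedness. So `μ = 0` and `K` is invariant under all the rotations `R_t`.

A pointed rotation-invariant cone meets the plane `x₂ = 0` only in `0`. Hence `K` lies on one
side of that plane and contains an axis point `(0, 0, h)`, `h ≠ 0` (the midpoint of a point of
`K` off that plane and its half-turn). Its slice `{s | (s, 0, h) ∈ K}` is a closed interval
`[-ρ, ρ]` (convex, symmetric under the half-turn, and bounded because `K` cannot contain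
`(1, 0, 0)`), and rotating every point into the half-plane `x₁ = 0, x₀ ≥ 0` gives
`K = {x | √(x₀² + x₁²) ≤ (ρ / h) x₂}`. Rescaling the last coordinate by `ρ / h` maps this onto
the second-order cone.
-/

open Matrix Set

/-- A regular convex cone: closed, convex, invariant under positive scalings,
with nonempty interior, containing no line (pointed). -/
def IsRegularCone {n : ℕ} (K : Set (Fin n → ℝ)) : Prop :=
  IsClosed K ∧ Convex ℝ K ∧ (∀ c : ℝ, 0 < c → ∀ x ∈ K, c • x ∈ K) ∧
    (interior K).Nonempty ∧ ∀ x ∈ K, -x ∈ K → x = 0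

/-- Two cones in ℝ³ are isomorphic if a linear automorphism maps one onto the other. -/
def ConeIso (K K' : Set (Fin 3 → ℝ)) : Prop :=
  ∃ S : Matrix (Fin 3) (Fin 3) ℝ, IsUnit S.det ∧ (fun v => S.mulVec v) '' K = K'

open Filter Topology

open NormedSpace in
theorem exp_smul_mul_eq_of_hasDerivAt {𝔸 : Type*} [NormedRing 𝔸] [NormedAlgebra ℝ 𝔸]
    [CompleteSpace 𝔸] {A : 𝔸} {N : ℝ → 𝔸} (hN : ∀ s, HasDerivAt N (A * N s) s) (t : ℝ) :
    exp (t • A) * N 0 = N t := by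
  have hconst : ∀ u, HasDerivAt (fun u : ℝ => exp ((-u) • A) * N u) 0 u := fun u =>
    (((hasDerivAt_exp_smul_const A (-u)).scomp u (hasDerivAt_neg u)).mul (hN u)).congr_deriv
      (by simp [mul_assoc])
  have h := is_const_of_deriv_eq_zero (fun u => (hconst u).differentiableAt)
    (fun u => (hconst u).deriv) t 0
  simp only [neg_zero, zero_smul, NormedSpace.exp_zero, one_mul] at h
  -- `exp_add_of_commute` wants a `ℚ`-algebra instance; the ball version works over `ℝ`
  rw [← h, ← mul_assoc, ← exp_add_of_commute_of_mem_ball (𝕂 := ℝ)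
    (((Commute.refl A).smul_left t).smul_right (-t)) (by simp [expSeries_radius_eq_top])
    (by simp [expSeries_radius_eq_top]), ← add_smul, add_neg_cancel, zero_smul, exp_zero, one_mul]

theorem exists_mem_apply_ne_zero_of_nonempty_interior {ι : Type*} {s : Set (ι → ℝ)}
    (hs : (interior s).Nonempty) (i : ι) : ∃ x ∈ s, x i ≠ 0 := by
  classical
  by_contra! h
  have hker : LinearMap.ker (LinearMap.proj i : (ι → ℝ) →ₗ[ℝ] ℝ) = ⊤ :=
    Submodule.eq_top_of_nonempty_interior' _ (hs.mono (interior_mono h))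
  simpa using hker.ge (Submodule.mem_top (x := Pi.single i 1))

namespace IsRegularCone

variable {n : ℕ} {K : Set (Fin n → ℝ)}

theorem isClosed (hK : IsRegularCone K) : IsClosed K := hK.1

theorem convex (hK : IsRegularCone K) : Convex ℝ K := hK.2.1

theorem interior_nonempty (hK : IsRegularCone K) : (interior K).Nonempty := hK.2.2.2.1

theorem eq_zero_of_neg_mem (hK : IsRegularCone K) {x : Fin n → ℝ} (hx : x ∈ K) (hnx : -x ∈ K) :
    x = 0 :=
  hK.2.2.2.2 x hx hnx

theorem smul_mem (hK : IsRegularCone K) {c : ℝ} (hc : 0 < c) {x : Fin n → ℝ} (hx : x ∈ K) :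
    c • x ∈ K :=
  hK.2.2.1 c hc x hx

theorem smul_mem_iff (hK : IsRegularCone K) {c : ℝ} (hc : 0 < c) {x : Fin n → ℝ} :
    c • x ∈ K ↔ x ∈ K :=
  ⟨fun h => by simpa [smul_smul, hc.ne'] using hK.smul_mem (inv_pos.2 hc) h, hK.smul_mem hc⟩

theorem add_mem (hK : IsRegularCone K) {x y : Fin n → ℝ} (hx : x ∈ K) (hy : y ∈ K) :
    x + y ∈ K := by
  have := hK.smul_mem two_pos (hK.convex hx hy one_half_pos.le one_half_pos.le (add_halves 1))
  rwa [smul_add, smul_smul, smul_smul, mul_one_div_cancel two_ne_zero, one_smul, one_smul] at this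

theorem zero_mem (hK : IsRegularCone K) : (0 : Fin n → ℝ) ∈ K := by
  obtain ⟨x, hx⟩ := hK.interior_nonempty
  have hlim : Tendsto (fun c : ℝ => c • x) (𝓝[>] 0) (𝓝 0) := by
    simpa using (tendsto_nhdsWithin_of_tendsto_nhds (tendsto_id (x := 𝓝 (0 : ℝ)))).smul_const x
  exact hK.isClosed.mem_of_tendsto hlim
    (eventually_nhdsWithin_of_forall fun c hc => hK.smul_mem hc (interior_subset hx))

end IsRegularCone

noncomputable section Spiral

open Real

def spiralGen (μ : ℝ) : Matrix (Fin 3) (Fin 3) ℝ := !![μ,1,0;-1,μ,0;0,0,0]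

def planeProj : Matrix (Fin 3) (Fin 3) ℝ := !![1,0,0;0,1,0;0,0,0]

def planeRotGen : Matrix (Fin 3) (Fin 3) ℝ := !![0,1,0;-1,0,0;0,0,0]

def axisProj : Matrix (Fin 3) (Fin 3) ℝ := !![0,0,0;0,0,0;0,0,1]

def spiralMatrix (μ t : ℝ) : Matrix (Fin 3) (Fin 3) ℝ :=
  axisProj + (exp (μ * t) * cos t) • planeProj + (exp (μ * t) * sin t) • planeRotGen

theorem spiralGen_mul (μ a b : ℝ) :
    spiralGen μ * (axisProj + a • planeProj + b • planeRotGen)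
      = (μ * a - b) • planeProj + (a + μ * b) • planeRotGen := by
  ext i j
  fin_cases i <;> fin_cases j <;>
    simp [spiralGen, planeProj, planeRotGen, axisProj, mul_apply, Fin.sum_univ_three] <;> ring

open scoped Matrix.Norms.Operator in
theorem hasDerivAt_spiralMatrix (μ s : ℝ) :
    HasDerivAt (spiralMatrix μ) (spiralGen μ * spiralMatrix μ s) s := by
  have hexp : HasDerivAt (fun u => exp (μ * u)) (exp (μ * s) * μ) s := by
    simpa using ((hasDerivAt_id s).const_mul μ).exp
  have hre := hexp.mul (hasDerivAt_cos s)
  have him := hexp.mul (hasDerivAt_sin s)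
  rw [spiralMatrix, spiralGen_mul]
  refine (((hasDerivAt_const s axisProj).add (hre.smul_const planeProj)).add
    (him.smul_const planeRotGen)).congr_deriv ?_
  rw [zero_add]
  congr 2 <;> ring

theorem spiralMatrix_zero (μ : ℝ) : spiralMatrix μ 0 = 1 := by
  ext i j
  fin_cases i <;> fin_cases j <;> simp [spiralMatrix, planeProj, planeRotGen, axisProj]

theorem exp_smul_spiralGen (μ t : ℝ) :
    NormedSpace.exp (t • spiralGen μ) = spiralMatrix μ t := by
  open scoped Matrix.Norms.Operator in
  have h := exp_smul_mul_eq_of_hasDerivAt (hasDerivAt_spiralMatrix μ) t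
  rwa [spiralMatrix_zero, mul_one] at h

theorem spiralMatrix_mulVec (μ t : ℝ) (x : Fin 3 → ℝ) :
    spiralMatrix μ t *ᵥ x = ![exp (μ * t) * (cos t * x 0 + sin t * x 1),
      exp (μ * t) * (-sin t * x 0 + cos t * x 1), x 2] := by
  ext i
  fin_cases i <;>
    simp [spiralMatrix, planeProj, planeRotGen, axisProj, mulVec, dotProduct,
      Fin.sum_univ_three] <;> ring

theorem eq_zero_of_forall_spiralMatrix_mulVec_mem {μ : ℝ} (hμ : 0 ≤ μ) {K : Set (Fin 3 → ℝ)}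
    (hK : IsRegularCone K) (hKμ : ∀ t, ∀ x ∈ K, spiralMatrix μ t *ᵥ x ∈ K) : μ = 0 := by
  refine (hμ.lt_or_eq.resolve_left fun hμpos => ?_).symm
  obtain ⟨x, hx, hx0⟩ := exists_mem_apply_ne_zero_of_nonempty_interior hK.interior_nonempty 0
  set y : Fin 3 → ℝ := ![x 0, x 1, 0]
  have hy : y ∈ K := by
    have hdecay : Tendsto (fun n : ℕ => exp (-(μ * (n * (2 * π)))) * x 2) atTop (𝓝 0) := by
      simpa using (tendsto_exp_atBot.comp (tendsto_neg_atTop_atBot.comp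
        ((tendsto_natCast_atTop_atTop.atTop_mul_const (by positivity)).const_mul_atTop
          hμpos))).mul_const (x 2)
    have hlim : Tendsto (fun n : ℕ => ![x 0, x 1, exp (-(μ * (n * (2 * π)))) * x 2]) atTop
        (𝓝 y) :=
      ((by fun_prop : Continuous fun z : ℝ => ![x 0, x 1, z]).tendsto 0).comp hdecay
    refine hK.isClosed.mem_of_tendsto hlim (Eventually.of_forall fun n => ?_)
    convert hK.smul_mem (exp_pos (-(μ * (n * (2 * π))))) (hKμ (n * (2 * π)) x hx) using 1
    rw [spiralMatrix_mulVec, cos_periodic.nat_mul_eq, sin_periodic.nat_mul_eq]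
    ext i
    fin_cases i <;> simp [Real.exp_neg]
  have hny : -y ∈ K := by
    convert hK.smul_mem (exp_pos (-(μ * π))) (hKμ π y hy) using 1
    rw [spiralMatrix_mulVec]
    ext i
    fin_cases i <;> simp [y, Real.exp_neg]
  exact hx0 (congr_fun (hK.eq_zero_of_neg_mem hy hny) 0)

end Spiral

noncomputable section RotationInvariant

open Real

def rot (t : ℝ) (x : Fin 3 → ℝ) : Fin 3 → ℝ :=
  ![cos t * x 0 + sin t * x 1, -sin t * x 0 + cos t * x 1, x 2]

theorem spiralMatrix_zero_mulVec (t : ℝ) (x : Fin 3 → ℝ) : spiralMatrix 0 t *ᵥ x = rot t x := by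
  simp [spiralMatrix_mulVec, rot]

theorem rot_rot (s t : ℝ) (x : Fin 3 → ℝ) : rot s (rot t x) = rot (s + t) x := by
  ext i
  fin_cases i <;> simp [rot, cos_add, sin_add] <;> ring

theorem rot_zero (x : Fin 3 → ℝ) : rot 0 x = x := by
  ext i
  fin_cases i <;> simp [rot]

theorem exists_rot_eq (x : Fin 3 → ℝ) : ∃ t, rot t x = ![√(x 0 ^ 2 + x 1 ^ 2), 0, x 2] := by
  obtain ⟨r, θ, hr, hx0, hx1⟩ : ∃ r θ, r = √(x 0 ^ 2 + x 1 ^ 2) ∧ r * cos θ = x 0 ∧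
      r * sin θ = x 1 :=
    ⟨_, _, Complex.norm_eq_sqrt_sq_add_sq ⟨x 0, x 1⟩, Complex.norm_mul_cos_arg _,
      Complex.norm_mul_sin_arg _⟩
  refine ⟨θ, ?_⟩
  rw [← hr]
  ext i
  fin_cases i <;> simp [rot, ← hx0, ← hx1]
  · linear_combination r * sin_sq_add_cos_sq θ
  · ring

variable {K : Set (Fin 3 → ℝ)}

theorem rot_mem_iff (hrot : ∀ t, ∀ x ∈ K, rot t x ∈ K) (t : ℝ) {x : Fin 3 → ℝ} :
    rot t x ∈ K ↔ x ∈ K :=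
  ⟨fun h => by simpa [rot_rot, rot_zero] using hrot (-t) _ h, hrot t x⟩

theorem mem_iff_sqrt_mem (hrot : ∀ t, ∀ x ∈ K, rot t x ∈ K) (x : Fin 3 → ℝ) :
    x ∈ K ↔ ![√(x 0 ^ 2 + x 1 ^ 2), 0, x 2] ∈ K := by
  obtain ⟨t, ht⟩ := exists_rot_eq x
  rw [← ht, rot_mem_iff hrot]

theorem eq_zero_of_apply_two_eq_zero (hK : IsRegularCone K) (hrot : ∀ t, ∀ x ∈ K, rot t x ∈ K)
    {x : Fin 3 → ℝ} (hx : x ∈ K) (h2 : x 2 = 0) : x = 0 := by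
  refine hK.eq_zero_of_neg_mem hx ?_
  convert hrot π x hx using 1
  ext i
  fin_cases i <;> simp [rot, h2]

theorem apply_two_mul_nonneg (hK : IsRegularCone K) (hrot : ∀ t, ∀ x ∈ K, rot t x ∈ K)
    {x y : Fin 3 → ℝ} (hx : x ∈ K) (hy : y ∈ K) : 0 ≤ x 2 * y 2 := by
  by_contra! hneg
  have hx2 : x 2 ≠ 0 := by rintro h; simp [h] at hneg
  set a := -(y 2 / x 2)
  have ha : 0 < a := by
    have : y 2 / x 2 = x 2 * y 2 / x 2 ^ 2 := by field_simp
    rw [neg_pos, this]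
    exact div_neg_of_neg_of_pos hneg (by positivity)
  have hsum : a • x + y = 0 := by
    refine eq_zero_of_apply_two_eq_zero hK hrot (hK.add_mem (hK.smul_mem ha hx) hy) ?_
    simp [a, hx2]
  have hy0 : y = 0 := by
    refine hK.eq_zero_of_neg_mem hy ?_
    rw [neg_eq_of_add_eq_zero_left hsum]
    exact hK.smul_mem ha hx
  simp [hy0] at hneg

theorem exists_axis_mem (hK : IsRegularCone K) (hrot : ∀ t, ∀ x ∈ K, rot t x ∈ K) :
    ∃ h ≠ 0, ![0, 0, h] ∈ K := by
  obtain ⟨x, hx, hx2⟩ := exists_mem_apply_ne_zero_of_nonempty_interior hK.interior_nonempty 2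
  refine ⟨2 * x 2, mul_ne_zero two_ne_zero hx2, ?_⟩
  convert hK.add_mem hx (hrot π x hx) using 1
  ext i
  fin_cases i <;> simp [rot]
  ring

def slice (K : Set (Fin 3 → ℝ)) (h : ℝ) : Set ℝ := {s | ![s, 0, h] ∈ K}

variable {h : ℝ}

theorem neg_mem_slice (hrot : ∀ t, ∀ x ∈ K, rot t x ∈ K) {s : ℝ} (hs : s ∈ slice K h) :
    -s ∈ slice K h := by
  show ![-s, 0, h] ∈ K
  convert hrot π _ hs using 1
  ext i
  fin_cases i <;> simp [rot]

theorem ordConnected_slice (hconv : Convex ℝ K) : (slice K h).OrdConnected := by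
  refine Convex.ordConnected fun s hs s' hs' a b ha hb hab => ?_
  show ![a * s + b * s', 0, h] ∈ K
  convert hconv hs hs' ha hb hab using 1
  ext i
  fin_cases i <;> simp
  linear_combination -h * hab

theorem bddAbove_slice (hK : IsRegularCone K) (hrot : ∀ t, ∀ x ∈ K, rot t x ∈ K)
    (hh : ![0, 0, h] ∈ K) : BddAbove (slice K h) := by
  by_contra hunb
  have hmem : ∀ s, 0 < s → ![1, 0, h / s] ∈ K := by
    intro s hs
    obtain ⟨s', hs', hss'⟩ := not_bddAbove_iff.1 hunb s
    have hsT : s ∈ slice K h := (ordConnected_slice hK.convex).out hh hs' ⟨hs.le, hss'.le⟩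
    convert hK.smul_mem (inv_pos.2 hs) hsT using 1
    ext i
    fin_cases i <;> simp [hs.ne', div_eq_inv_mul]
  have h100 : ![1, 0, 0] ∈ K := by
    have hlim : Tendsto (fun s : ℝ => ![1, 0, h / s]) atTop (𝓝 ![1, 0, 0]) :=
      ((by fun_prop : Continuous fun z : ℝ => ![1, 0, z]).tendsto 0).comp
        (tendsto_const_nhds.div_atTop tendsto_id)
    refine hK.isClosed.mem_of_tendsto hlim ?_
    filter_upwards [eventually_gt_atTop 0] with s hs using hmem s hs
  simpa using congr_fun (eq_zero_of_apply_two_eq_zero hK hrot h100 rfl) 0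

theorem mem_slice_iff (hK : IsRegularCone K) (hrot : ∀ t, ∀ x ∈ K, rot t x ∈ K)
    (hh : ![0, 0, h] ∈ K) {s : ℝ} : s ∈ slice K h ↔ |s| ≤ sSup (slice K h) := by
  have hbdd := bddAbove_slice hK hrot hh
  refine ⟨fun hs => abs_le'.2 ⟨le_csSup hbdd hs, le_csSup hbdd (neg_mem_slice hrot hs)⟩,
    fun hs => ?_⟩
  have hsup : sSup (slice K h) ∈ slice K h :=
    (hK.isClosed.preimage (by fun_prop)).csSup_mem ⟨0, hh⟩ hbdd
  exact (ordConnected_slice hK.convex).out (neg_mem_slice hrot hsup) hsup (abs_le.1 hs)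

theorem mem_iff_sqrt_le_of_div_pos (hK : IsRegularCone K) (hrot : ∀ t, ∀ x ∈ K, rot t x ∈ K)
    (hh : ![0, 0, h] ∈ K) {x : Fin 3 → ℝ} (hx : 0 < x 2 / h) :
    x ∈ K ↔ √(x 0 ^ 2 + x 1 ^ 2) ≤ sSup (slice K h) / h * x 2 := by
  have hx2 : x 2 ≠ 0 := fun h0 => by simp [h0] at hx
  have hh0 : h ≠ 0 := fun h0 => by simp [h0] at hx
  have hscale : (x 2 / h)⁻¹ • ![√(x 0 ^ 2 + x 1 ^ 2), 0, x 2]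
      = ![√(x 0 ^ 2 + x 1 ^ 2) / (x 2 / h), 0, h] := by
    ext i
    fin_cases i <;> simp [div_eq_inv_mul]
    field_simp
  rw [mem_iff_sqrt_mem hrot, ← hK.smul_mem_iff (inv_pos.2 hx), hscale]
  change _ ∈ slice K h ↔ _
  rw [mem_slice_iff hK hrot hh, abs_of_nonneg (by positivity), div_le_iff₀ hx, div_mul_comm,
    mul_comm]

theorem sSup_slice_pos (hK : IsRegularCone K) (hrot : ∀ t, ∀ x ∈ K, rot t x ∈ K)
    (hh0 : h ≠ 0) (hh : ![0, 0, h] ∈ K) : 0 < sSup (slice K h) := by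
  obtain ⟨y, hy, hy0⟩ := exists_mem_apply_ne_zero_of_nonempty_interior hK.interior_nonempty 0
  have hy2 : y 2 ≠ 0 := fun h2 => hy0 (by simp [eq_zero_of_apply_two_eq_zero hK hrot hy h2])
  have hyh : 0 < y 2 / h :=
    div_pos_iff.2 (mul_pos_iff.1 (lt_of_le_of_ne (apply_two_mul_nonneg hK hrot hy hh)
      (mul_ne_zero hy2 hh0).symm))
  have hr : 0 < √(y 0 ^ 2 + y 1 ^ 2) := sqrt_pos.2 (by positivity)
  have hle := (mem_iff_sqrt_le_of_div_pos hK hrot hh hyh).1 hy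
  rw [div_mul_comm] at hle
  exact pos_of_mul_pos_right (hr.trans_le hle) hyh.le

theorem exists_eq_setOf_sqrt_le_mul (hK : IsRegularCone K)
    (hrot : ∀ t, ∀ x ∈ K, rot t x ∈ K) :
    ∃ c ≠ 0, K = {x | √(x 0 ^ 2 + x 1 ^ 2) ≤ c * x 2} := by
  obtain ⟨h, hh0, hh⟩ := exists_axis_mem hK hrot
  have hρ := sSup_slice_pos hK hrot hh0 hh
  refine ⟨sSup (slice K h) / h, div_ne_zero hρ.ne' hh0, ?_⟩
  ext x
  rcases lt_trichotomy (x 2 / h) 0 with hneg | hzero | hpos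
  · refine iff_of_false (fun hx => (apply_two_mul_nonneg hK hrot hx hh).not_gt
      (mul_neg_iff.2 (div_neg_iff.1 hneg))) ?_
    rw [mem_ofPred_eq, not_le]
    calc sSup (slice K h) / h * x 2 = sSup (slice K h) * (x 2 / h) := by ring
      _ < 0 := mul_neg_of_pos_of_neg hρ hneg
      _ ≤ √(x 0 ^ 2 + x 1 ^ 2) := sqrt_nonneg _
  · have hx2 : x 2 = 0 := by simpa [hh0] using hzero
    rw [mem_iff_sqrt_mem hrot, mem_ofPred_eq, hx2, mul_zero]
    refine ⟨fun hx => ?_, fun hr => ?_⟩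
    · simpa using (congr_fun (eq_zero_of_apply_two_eq_zero hK hrot hx rfl) 0).le
    · rw [le_antisymm hr (sqrt_nonneg _)]
      convert hK.zero_mem using 1
      ext i
      fin_cases i <;> rfl
  · exact mem_iff_sqrt_le_of_div_pos hK hrot hh hpos

end RotationInvariant

theorem coneIso_setOf_sqrt_le_mul {c : ℝ} (hc : c ≠ 0) :
    ConeIso {x | √(x 0 ^ 2 + x 1 ^ 2) ≤ c * x 2} {v | √(v 0 ^ 2 + v 1 ^ 2) ≤ v 2} := by
  have hmulVec : ∀ v, !![1, 0, 0; 0, 1, 0; 0, 0, c] *ᵥ v = ![v 0, v 1, c * v 2] := fun v => by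
    ext i
    fin_cases i <;> simp [mulVec, dotProduct, Fin.sum_univ_three]
  refine ⟨!![1, 0, 0; 0, 1, 0; 0, 0, c], by simp [det_fin_three, hc], ?_⟩
  ext v
  simp only [mem_image, mem_ofPred_eq, hmulVec]
  refine ⟨fun ⟨x, hx, hxv⟩ => hxv ▸ by simpa using hx, fun hv => ⟨![v 0, v 1, v 2 / c], ?_, ?_⟩⟩
  · simpa [mul_div_cancel₀ _ hc] using hv
  · ext i
    fin_cases i <;> simp [mul_div_cancel₀ _ hc]

/-- if a regular convex cone in ℝ³ is invariant under the one-parameter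
group generated by [[μ,1,0],[−1,μ,0],[0,0,0]] with μ ≥ 0, then μ = 0 and the cone is
isomorphic to the second-order cone. -/
theorem cone_invariant_rotation_is_soc (μ : ℝ) (hμ : 0 ≤ μ)
    (K : Set (Fin 3 → ℝ)) (hK : IsRegularCone K)
    (hinv : ∀ t : ℝ,
      (fun v => (NormedSpace.exp (t • (!![μ,1,0;-1,μ,0;0,0,0] : Matrix (Fin 3) (Fin 3) ℝ))).mulVec v) '' K = K) :
    μ = 0 ∧ ConeIso K {v | Real.sqrt ((v 0)^2 + (v 1)^2) ≤ v 2} := by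
  have hspiral : ∀ t, ∀ x ∈ K, spiralMatrix μ t *ᵥ x ∈ K := fun t x hx => by
    rw [← hinv t]
    exact ⟨x, hx, by rw [← exp_smul_spiralGen]; rfl⟩
  obtain rfl : μ = 0 := eq_zero_of_forall_spiralMatrix_mulVec_mem hμ hK hspiral
  obtain ⟨c, hc, rfl⟩ := exists_eq_setOf_sqrt_le_mul hK fun t x hx => by
    simpa only [spiralMatrix_zero_mulVec] using hspiral t x hx
  exact ⟨rfl, coneIso_setOf_sqrt_le_mul hc⟩
end

section
/- Let φ : (0,∞) → ℝ be twice continuously differentiable, let Ω = {(x,y,z) ∈ ℝ³ : z > 0, y > z·exp(x/z)}, and define F : Ω → ℝ by F(x,y,z) = −log y − 2·log z + φ(t), where t = log(y/z) − x/z. Then the Hessian F''(x,y,z) is positive definite if and only if φ̇(t) < 2/3 and φ̈(t) > φ̇(t)²(1 − φ̇(t))/(2 − 3φ̇(t)). -/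
/-!
Write `F = g + φ ∘ t` with `g = -log y - 2 log z`. The chain rule gives
`F'' = g'' + φ̈ ∇t ∇tᵀ + φ̇ t''`, and this matrix factors as `Pᵀ K P`, where the invertible
matrix `P` (`frame`) has rows `e₁ / y`, `e₂ / z`, `∇t` and
`K = [[1 - φ̇, φ̇, 0], [φ̇, 2 - φ̇, -φ̇], [0, -φ̇, φ̈]]` (`reducedHessian`) depends only on `φ̇, φ̈`.
Hence `F''` is positive definite iff `K` is, i.e. iff the leading minors `1 - φ̇`, `2 - 3φ̇` and
`φ̈ (2 - 3φ̇) - φ̇² (1 - φ̇)` of `K` are positive.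
-/

open Real Filter Topology Matrix

noncomputable def hessian {n : ℕ} (F : (Fin n → ℝ) → ℝ) (x : Fin n → ℝ) :
    Matrix (Fin n) (Fin n) ℝ :=
  fun i j => fderiv ℝ (fun y => fderiv ℝ F y (Pi.single j 1)) x (Pi.single i 1)

section Calculus

variable {E F : Type*} [NormedAddCommGroup E] [NormedSpace ℝ E] [NormedAddCommGroup F]
  [NormedSpace ℝ F]

lemma ContDiffAt.eventually_differentiableAt {f : E → F} {x : E} {k : ℕ}
    (hf : ContDiffAt ℝ (k + 1) f x) : ∀ᶠ y in 𝓝 x, DifferentiableAt ℝ f y :=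
  (hf.eventually (by simp)).mono fun _ hy => hy.differentiableAt (by simp)

lemma ContDiffAt.differentiableAt_fderiv_apply {f : E → F} {x : E} (hf : ContDiffAt ℝ 2 f x)
    (d : E) : DifferentiableAt ℝ (fun y => fderiv ℝ f y d) x :=
  ((hf.fderiv_right (m := 1) le_rfl).differentiableAt one_ne_zero).clm_apply
    (differentiableAt_const d)

end Calculus

section Hessian

variable {n : ℕ}

noncomputable def dotProductCLM (c : Fin n → ℝ) : (Fin n → ℝ) →L[ℝ] ℝ :=
  ∑ i, c i • ContinuousLinearMap.proj i

@[simp]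
lemma dotProductCLM_apply (c d : Fin n → ℝ) : dotProductCLM c d = c ⬝ᵥ d := by
  simp [dotProductCLM, dotProduct]

lemma dotProductCLM_single (c : Fin n → ℝ) (i : Fin n) :
    dotProductCLM c (Pi.single i 1) = c i := by
  simp

lemma hasFDerivAt_apply_inv {w : Fin n → ℝ} (i : Fin n) (hw : w i ≠ 0) :
    HasFDerivAt (fun v : Fin n → ℝ => (v i)⁻¹)
      ((-(w i ^ 2)⁻¹) • ContinuousLinearMap.proj (R := ℝ) i) w :=
  (hasDerivAt_inv hw).comp_hasFDerivAt w (hasFDerivAt_apply i w)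

lemma eventually_pos_apply {w : Fin n → ℝ} {i : Fin n} (hw : 0 < w i) :
    ∀ᶠ v in 𝓝 w, 0 < v i :=
  (continuous_apply i).continuousAt.eventually (eventually_gt_nhds hw)

lemma hessian_eq_of_hasFDerivAt {F : (Fin n → ℝ) → ℝ} {x : Fin n → ℝ}
    {G : (Fin n → ℝ) → Fin n → ℝ} {H : Matrix (Fin n) (Fin n) ℝ}
    (hF : ∀ᶠ y in 𝓝 x, HasFDerivAt F (dotProductCLM (G y)) y)
    (hG : ∀ j, HasFDerivAt (fun y => G y j) (dotProductCLM fun i => H i j) x) :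
    hessian F x = H := by
  ext i j
  have hpartial : (fun y => fderiv ℝ F y (Pi.single j 1)) =ᶠ[𝓝 x] fun y => G y j := by
    filter_upwards [hF] with y hy
    rw [hy.fderiv, dotProductCLM_single]
  rw [hessian, hpartial.fderiv_eq, (hG j).fderiv, dotProductCLM_single]

lemma hessian_add {f g : (Fin n → ℝ) → ℝ} {x : Fin n → ℝ}
    (hf : ContDiffAt ℝ 2 f x) (hg : ContDiffAt ℝ 2 g x) :
    hessian (f + g) x = hessian f x + hessian g x := by
  ext i j
  have hpartial : (fun y => fderiv ℝ (f + g) y (Pi.single j 1)) =ᶠ[𝓝 x]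
      fun y => fderiv ℝ f y (Pi.single j 1) + fderiv ℝ g y (Pi.single j 1) := by
    filter_upwards [hf.eventually_differentiableAt, hg.eventually_differentiableAt]
      with y hfy hgy
    rw [fderiv_add hfy hgy, _root_.add_apply]
  have hsum : HasFDerivAt
      (fun y => fderiv ℝ f y (Pi.single j 1) + fderiv ℝ g y (Pi.single j 1)) _ x :=
    (hf.differentiableAt_fderiv_apply _).hasFDerivAt.add
      (hg.differentiableAt_fderiv_apply _).hasFDerivAt
  rw [Matrix.add_apply, hessian, hpartial.fderiv_eq, hsum.fderiv]
  rfl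

lemma hessian_comp {φ : ℝ → ℝ} {t : (Fin n → ℝ) → ℝ} {x : Fin n → ℝ}
    (hφ : ContDiffAt ℝ 2 φ (t x)) (ht : ContDiffAt ℝ 2 t x) :
    hessian (φ ∘ t) x =
      deriv (deriv φ) (t x) • vecMulVec (fun i => fderiv ℝ t x (Pi.single i 1))
          (fun i => fderiv ℝ t x (Pi.single i 1)) +
        deriv φ (t x) • hessian t x := by
  ext i j
  have hpartial : (fun y => fderiv ℝ (φ ∘ t) y (Pi.single j 1)) =ᶠ[𝓝 x]
      fun y => deriv φ (t y) * fderiv ℝ t y (Pi.single j 1) := by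
    filter_upwards [ht.continuousAt.eventually hφ.eventually_differentiableAt,
      ht.eventually_differentiableAt] with y hφy hty
    rw [(hφy.hasDerivAt.comp_hasFDerivAt y hty.hasFDerivAt).fderiv]
    simp
  have hφ' : DifferentiableAt ℝ (deriv φ) (t x) :=
    (hφ.derivWithin (m := 1) le_rfl).differentiableAt one_ne_zero
  have hprod : HasFDerivAt (fun y => deriv φ (t y) * fderiv ℝ t y (Pi.single j 1)) _ x :=
    (hφ'.hasDerivAt.comp_hasFDerivAt x (ht.differentiableAt two_ne_zero).hasFDerivAt).mul
      (ht.differentiableAt_fderiv_apply (Pi.single j 1)).hasFDerivAt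
  rw [hessian, hpartial.fderiv_eq, hprod.fderiv]
  simp only [Function.comp_apply, _root_.add_apply, _root_.smul_apply, smul_eq_mul, vecMulVec,
    smul_of, Matrix.add_apply, of_apply, Pi.smul_apply, Matrix.smul_apply, hessian]
  ring

end Hessian

namespace ExpCone

noncomputable def logBarrier (w : Fin 3 → ℝ) : ℝ := -Real.log (w 1) - 2 * Real.log (w 2)

noncomputable def logRatio (w : Fin 3 → ℝ) : ℝ := Real.log (w 1 / w 2) - w 0 / w 2

noncomputable def gradLogBarrier (w : Fin 3 → ℝ) : Fin 3 → ℝ :=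
  ![0, -(w 1)⁻¹, -2 * (w 2)⁻¹]

noncomputable def gradLogRatio (w : Fin 3 → ℝ) : Fin 3 → ℝ :=
  ![-(w 2)⁻¹, (w 1)⁻¹, w 0 * (w 2)⁻¹ ^ 2 - (w 2)⁻¹]

noncomputable def hessLogBarrier (w : Fin 3 → ℝ) : Matrix (Fin 3) (Fin 3) ℝ :=
  diagonal ![0, (w 1)⁻¹ ^ 2, 2 * (w 2)⁻¹ ^ 2]

noncomputable def hessLogRatio (w : Fin 3 → ℝ) : Matrix (Fin 3) (Fin 3) ℝ :=
  !![0, 0, (w 2)⁻¹ ^ 2;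
     0, -(w 1)⁻¹ ^ 2, 0;
     (w 2)⁻¹ ^ 2, 0, (w 2)⁻¹ ^ 2 - 2 * w 0 * (w 2)⁻¹ ^ 3]

noncomputable def frame (w : Fin 3 → ℝ) : Matrix (Fin 3) (Fin 3) ℝ :=
  Matrix.of ![![0, (w 1)⁻¹, 0], ![0, 0, (w 2)⁻¹], gradLogRatio w]

def reducedHessian (a b : ℝ) : Matrix (Fin 3) (Fin 3) ℝ :=
  !![1 - a, a, 0;
     a, 2 - a, -a;
     0, -a, b]

variable {w : Fin 3 → ℝ}

lemma logRatio_pos (hz : 0 < w 2) (h : w 2 * exp (w 0 / w 2) < w 1) : 0 < logRatio w := by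
  have hlog := Real.log_lt_log (by positivity) h
  rw [Real.log_mul hz.ne' (exp_pos _).ne', Real.log_exp] at hlog
  rw [logRatio, Real.log_div (by linarith [mul_pos hz (exp_pos (w 0 / w 2))]) hz.ne']
  linarith

lemma contDiffAt_logBarrier (hy : 0 < w 1) (hz : 0 < w 2) : ContDiffAt ℝ 2 logBarrier w := by
  unfold logBarrier
  fun_prop (disch := positivity)

lemma contDiffAt_logRatio (hy : 0 < w 1) (hz : 0 < w 2) : ContDiffAt ℝ 2 logRatio w := by
  unfold logRatio
  fun_prop (disch := positivity)

lemma hasFDerivAt_logBarrier (hy : 0 < w 1) (hz : 0 < w 2) :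
    HasFDerivAt logBarrier (dotProductCLM (gradLogBarrier w)) w := by
  refine ((((hasFDerivAt_apply 1 w).log hy.ne').neg.sub
    (((hasFDerivAt_apply 2 w).log hz.ne').const_mul 2))).congr_fderiv ?_
  ext d
  simp only [_root_.sub_apply, _root_.neg_apply, _root_.smul_apply, ContinuousLinearMap.proj_apply,
    smul_eq_mul, gradLogBarrier, dotProductCLM_apply, dotProduct, Fin.sum_univ_three, cons_val]
  ring

lemma hasFDerivAt_logRatio (hy : 0 < w 1) (hz : 0 < w 2) :
    HasFDerivAt logRatio (dotProductCLM (gradLogRatio w)) w := by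
  have h := (((hasFDerivAt_apply 1 w).mul (hasFDerivAt_apply_inv 2 hz.ne')).log
    (by simp [hy.ne', hz.ne'])).sub ((hasFDerivAt_apply 0 w).mul (hasFDerivAt_apply_inv 2 hz.ne'))
  refine h.congr_fderiv ?_
  ext d
  simp only [Pi.mul_apply, _root_.sub_apply, _root_.add_apply, _root_.smul_apply,
    ContinuousLinearMap.proj_apply, smul_add, smul_eq_mul, gradLogRatio, dotProductCLM_apply,
    dotProduct, Fin.sum_univ_three, cons_val]
  field_simp
  ring

lemma hessian_logBarrier (hy : 0 < w 1) (hz : 0 < w 2) :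
    hessian logBarrier w = hessLogBarrier w := by
  refine hessian_eq_of_hasFDerivAt (((eventually_pos_apply hy).and (eventually_pos_apply hz)).mono
    fun v hv => hasFDerivAt_logBarrier hv.1 hv.2) fun j => ?_
  fin_cases j
  · exact (hasFDerivAt_const 0 w).congr_fderiv (by
      ext d; simp [hessLogBarrier, dotProduct, Fin.sum_univ_three])
  · exact (hasFDerivAt_apply_inv 1 hy.ne').neg.congr_fderiv (by
      ext d; simp [hessLogBarrier, dotProduct, Fin.sum_univ_three])
  · exact ((hasFDerivAt_apply_inv 2 hz.ne').const_mul (-2)).congr_fderiv (by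
      ext d; simp [hessLogBarrier, dotProduct, Fin.sum_univ_three]; ring)

lemma hessian_logRatio (hy : 0 < w 1) (hz : 0 < w 2) :
    hessian logRatio w = hessLogRatio w := by
  refine hessian_eq_of_hasFDerivAt (((eventually_pos_apply hy).and (eventually_pos_apply hz)).mono
    fun v hv => hasFDerivAt_logRatio hv.1 hv.2) fun j => ?_
  have hinv := hasFDerivAt_apply_inv 2 hz.ne'
  fin_cases j
  · exact hinv.neg.congr_fderiv (by
      ext d; simp [hessLogRatio, dotProduct, Fin.sum_univ_three])
  · exact (hasFDerivAt_apply_inv 1 hy.ne').congr_fderiv (by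
      ext d; simp [hessLogRatio, dotProduct, Fin.sum_univ_three])
  · exact (((hasFDerivAt_apply 0 w).mul (hinv.pow 2)).sub hinv).congr_fderiv (by
      ext d; simp [hessLogRatio, dotProduct, Fin.sum_univ_three]; field_simp; ring)

lemma isUnit_frame (hy : 0 < w 1) (hz : 0 < w 2) : IsUnit (frame w) := by
  rw [isUnit_iff_isUnit_det, isUnit_iff_ne_zero]
  simp [frame, gradLogRatio, det_fin_three, hy.ne', hz.ne']

lemma hessLogBarrier_add_eq_frame (a b : ℝ) :
    hessLogBarrier w + (b • vecMulVec (gradLogRatio w) (gradLogRatio w) + a • hessLogRatio w) =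
      star (frame w) * reducedHessian a b * frame w := by
  ext i j
  simp only [Matrix.add_apply, Matrix.smul_apply, vecMulVec_apply, smul_eq_mul]
  fin_cases i <;> fin_cases j <;>
    simp [hessLogBarrier, hessLogRatio, gradLogRatio, frame, reducedHessian,
      Matrix.mul_apply, Fin.sum_univ_three] <;> ring

lemma hessian_logBarrier_add_comp_logRatio {φ : ℝ → ℝ} (hy : 0 < w 1) (hz : 0 < w 2)
    (hφ : ContDiffAt ℝ 2 φ (logRatio w)) :
    hessian (logBarrier + φ ∘ logRatio) w =
      star (frame w) * reducedHessian (deriv φ (logRatio w)) (deriv (deriv φ) (logRatio w)) *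
        frame w := by
  have hgrad : (fun i => fderiv ℝ logRatio w (Pi.single i 1)) = gradLogRatio w := by
    ext i
    rw [(hasFDerivAt_logRatio hy hz).fderiv, dotProductCLM_single]
  rw [hessian_add (contDiffAt_logBarrier hy hz) (hφ.comp w (contDiffAt_logRatio hy hz)),
    hessian_comp hφ (contDiffAt_logRatio hy hz), hgrad, hessian_logBarrier hy hz,
    hessian_logRatio hy hz, hessLogBarrier_add_eq_frame]

section ReducedHessian

variable {a b : ℝ}

lemma isHermitian_reducedHessian : (reducedHessian a b).IsHermitian := by
  ext i j
  fin_cases i <;> fin_cases j <;> simp [reducedHessian]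

lemma dotProduct_reducedHessian_mulVec (x : Fin 3 → ℝ) :
    x ⬝ᵥ reducedHessian a b *ᵥ x =
      (1 - a) * x 0 ^ 2 + 2 * a * x 0 * x 1 + (2 - a) * x 1 ^ 2 - 2 * a * x 1 * x 2
        + b * x 2 ^ 2 := by
  simp only [dotProduct, mulVec, reducedHessian, of_apply, cons_val', cons_val_fin_one,
    Fin.sum_univ_three, cons_val]
  ring

lemma lt_of_posDef_reducedHessian (h : (reducedHessian a b).PosDef) :
    a < 2 / 3 ∧ a ^ 2 * (1 - a) < b * (2 - 3 * a) := by
  have hq : ∀ x : Fin 3 → ℝ, x ≠ 0 → 0 < x ⬝ᵥ reducedHessian a b *ᵥ x := fun x hx => by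
    simpa using h.dotProduct_mulVec_pos hx
  -- The test vectors `(-a, 1 - a, 0)` and `(-a², a (1 - a), 2 - 3a)` are last columns of the
  -- adjugates of the leading `2 × 2` block and of the whole matrix: they pick out the minors.
  have h₁ := hq ![1, 0, 0] (by simp)
  have h₂ := hq ![-a, 1 - a, 0] fun h => by
    have h0 := congrFun h 0
    have h1 := congrFun h 1
    simp only [Matrix.cons_val, Pi.zero_apply] at h0 h1
    linarith
  simp only [dotProduct_reducedHessian_mulVec, Matrix.cons_val] at h₁ h₂
  have ha : 0 < 2 - 3 * a := by nlinarith
  have h₃ := hq ![-a ^ 2, a * (1 - a), 2 - 3 * a] fun h => by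
    have h2 := congrFun h 2
    simp only [Matrix.cons_val, Pi.zero_apply] at h2
    linarith
  simp only [dotProduct_reducedHessian_mulVec, Matrix.cons_val] at h₃
  exact ⟨by linarith, by nlinarith⟩

lemma posDef_reducedHessian (ha : a < 2 / 3) (hD : a ^ 2 * (1 - a) < b * (2 - 3 * a)) :
    (reducedHessian a b).PosDef := by
  refine .of_dotProduct_mulVec_pos isHermitian_reducedHessian fun x hx => ?_
  have h23 : 0 < 2 - 3 * a := by linarith
  have h1 : 0 < 1 - a := by linarith
  have hD' : 0 < b * (2 - 3 * a) - a ^ 2 * (1 - a) := by linarith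
  have hsq : (1 - a) * (2 - 3 * a) * (x ⬝ᵥ reducedHessian a b *ᵥ x) =
      (2 - 3 * a) * ((1 - a) * x 0 + a * x 1) ^ 2 + ((2 - 3 * a) * x 1 - a * (1 - a) * x 2) ^ 2
        + (1 - a) * (b * (2 - 3 * a) - a ^ 2 * (1 - a)) * x 2 ^ 2 := by
    rw [dotProduct_reducedHessian_mulVec]
    ring
  rw [star_trivial]
  refine pos_of_mul_pos_right (hsq ▸ ?_ : 0 < (1 - a) * (2 - 3 * a) * _) (by positivity)
  by_cases h2 : x 2 = 0
  · by_cases h1' : x 1 = 0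
    · have h0 : x 0 ≠ 0 := fun h0 => hx (by ext i; fin_cases i <;> simp [h0, h1', h2])
      have : 0 < (2 - 3 * a) * ((1 - a) * x 0) ^ 2 := by positivity
      simp only [h1', h2]
      linarith
    · have : 0 < ((2 - 3 * a) * x 1) ^ 2 := by positivity
      simp only [h2]
      nlinarith [sq_nonneg ((1 - a) * x 0 + a * x 1)]
  · have : 0 < (1 - a) * (b * (2 - 3 * a) - a ^ 2 * (1 - a)) * x 2 ^ 2 := by positivity
    nlinarith [sq_nonneg ((1 - a) * x 0 + a * x 1),
      sq_nonneg ((2 - 3 * a) * x 1 - a * (1 - a) * x 2)]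

lemma posDef_reducedHessian_iff :
    (reducedHessian a b).PosDef ↔ a < 2 / 3 ∧ b > a ^ 2 * (1 - a) / (2 - 3 * a) := by
  refine ⟨fun h => ?_, fun ⟨ha, hb⟩ => ?_⟩
  · obtain ⟨ha, hD⟩ := lt_of_posDef_reducedHessian h
    exact ⟨ha, (div_lt_iff₀ (by linarith)).mpr hD⟩
  · exact posDef_reducedHessian ha ((div_lt_iff₀ (by linarith)).mp hb)

end ReducedHessian

end ExpCone

open ExpCone in
/-- positive definiteness criterion for the Hessian of the rotationally
reduced potential on the interior of the exponential cone. -/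
theorem hessian_posdef_iff_exp_cone_ansatz (φ : ℝ → ℝ) (hφ : ContDiffOn ℝ 2 φ (Set.Ioi 0))
    (F : (Fin 3 → ℝ) → ℝ)
    (hF : ∀ v : Fin 3 → ℝ,
      F v = -Real.log (v 1) - 2 * Real.log (v 2) + φ (Real.log (v 1 / v 2) - v 0 / v 2)) :
    ∀ v : Fin 3 → ℝ, 0 < v 2 → v 2 * Real.exp (v 0 / v 2) < v 1 →
      ((hessian F v).PosDef ↔
        (deriv φ (Real.log (v 1 / v 2) - v 0 / v 2) < 2/3 ∧
         deriv (deriv φ) (Real.log (v 1 / v 2) - v 0 / v 2) >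
           (deriv φ (Real.log (v 1 / v 2) - v 0 / v 2))^2
             * (1 - deriv φ (Real.log (v 1 / v 2) - v 0 / v 2))
             / (2 - 3 * deriv φ (Real.log (v 1 / v 2) - v 0 / v 2)))) := by
  intro v hz hyz
  have hy : 0 < v 1 := (mul_pos hz (exp_pos _)).trans hyz
  have hF' : F = logBarrier + φ ∘ logRatio := funext hF
  have hφ' : ContDiffAt ℝ 2 φ (logRatio v) :=
    hφ.contDiffAt (Ioi_mem_nhds (logRatio_pos hz hyz))
  rw [hF', hessian_logBarrier_add_comp_logRatio hy hz hφ',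
    (isUnit_frame hy hz).posDef_star_left_conjugate_iff]
  exact posDef_reducedHessian_iff
end
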